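/- arXiv:2302.06990 — 2 statements merged into one kernel-verified Lean document; each statement's English description precedes it below -/
import Mathlib

section
/- Let Θ : ℝ × N → N be a continuous proper ℝ-action on a locally compact Hausdorff space N. Then the relation ≤_Θ on N, defined by p ≤_Θ q if and only if there exists s ≥ 0 with q = Θ(s, p), is a closed subset of N × N. -/
/-- For a continuous proper ℝ-action on a locally compact Hausdorff space, the relation
`p ≤_Θ q ↔ ∃ s ≥ 0, q = Θ(s,p)` is closed in `N × N`. -/
theorem stmt_3 {N : Type*} [TopologicalSpace N] [LocallyCompactSpace N] [T2Space N]
    (Θ : ℝ × N → N)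
    (hcont : Continuous Θ)
    (hzero : ∀ p : N, Θ (0, p) = p)
    (hadd : ∀ (s t : ℝ) (p : N), Θ (s, Θ (t, p)) = Θ (s + t, p))
    (hproper : IsProperMap (fun sp : ℝ × N => (sp.2, Θ sp))) :
    IsClosed {pq : N × N | ∃ s : ℝ, 0 ≤ s ∧ pq.2 = Θ (s, pq.1)} := by
  have h : {pq : N × N | ∃ s : ℝ, 0 ≤ s ∧ pq.2 = Θ (s, pq.1)}
      = (fun sp : ℝ × N => (sp.2, Θ sp)) '' (Set.Ici (0:ℝ) ×ˢ Set.univ) := by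
    ext ⟨p, q⟩
    constructor
    · rintro ⟨s, hs, hq⟩
      exact ⟨(s, p), ⟨hs, trivial⟩, by simp [← hq]⟩
    · rintro ⟨⟨s, p'⟩, ⟨hs, -⟩, h⟩
      obtain ⟨h1, h2⟩ := Prod.mk.injEq .. ▸ h
      exact ⟨s, hs, by simp [← h1, ← h2]⟩
  rw [h]
  exact hproper.isClosedMap _ (isClosed_Ici.prod isClosed_univ)
end

section
/- Let Θ : ℝ × N → N be a continuous proper ℝ-action on a locally compact Hausdorff space N. Then for every compact subset K ⊆ N, the Θ-future J↑_Θ(K) = {q ∈ N : ∃ p ∈ K, ∃ s ≥ 0, q = Θ(s,p)} and the Θ-past J↓_Θ(K) = {q ∈ N : ∃ p ∈ K, ∃ s ≤ 0, q = Θ(s,p)} are closed subsets of N. -/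
/-- For a closed relation `R ⊆ X × Y` and compact `K ⊆ X`, the successor set
`{y | ∃ x ∈ K, (x, y) ∈ R}` is closed. -/
lemma succ_closed_of_closed_rel {X Y : Type*} [TopologicalSpace X] [TopologicalSpace Y]
    {R : Set (X × Y)} (hR : IsClosed R) {K : Set X} (hK : IsCompact K) :
    IsClosed {y : Y | ∃ x ∈ K, (x, y) ∈ R} := by
  rw [← isOpen_compl_iff, isOpen_iff_mem_nhds]
  intro y hy
  have hsub : K ×ˢ ({y} : Set Y) ⊆ Rᶜ := by
    rintro ⟨x, y'⟩ ⟨hx, hy'⟩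
    simp only [Set.mem_singleton_iff] at hy'
    subst hy'
    exact fun hmem => hy ⟨x, hx, hmem⟩
  obtain ⟨u, v, hu, hv, hKu, hyv, huv⟩ :=
    generalized_tube_lemma hK isCompact_singleton hR.isOpen_compl hsub
  refine Filter.mem_of_superset (hv.mem_nhds (hyv rfl)) ?_
  rintro y' hy' ⟨x, hx, hmem⟩
  exact huv ⟨hKu hx, hy'⟩ hmem

/-- For a continuous proper ℝ-action on a locally compact Hausdorff space and a compact
set `K`, the Θ-future `J↑_Θ(K)` and the Θ-past `J↓_Θ(K)` are closed. -/
theorem stmt_4 {N : Type*} [TopologicalSpace N] [LocallyCompactSpace N] [T2Space N]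
    (Θ : ℝ × N → N)
    (hcont : Continuous Θ)
    (hzero : ∀ p : N, Θ (0, p) = p)
    (hadd : ∀ (s t : ℝ) (p : N), Θ (s, Θ (t, p)) = Θ (s + t, p))
    (hproper : IsProperMap (fun sp : ℝ × N => (sp.2, Θ sp)))
    (K : Set N) (hK : IsCompact K) :
    IsClosed {q : N | ∃ p ∈ K, ∃ s : ℝ, 0 ≤ s ∧ q = Θ (s, p)} ∧
      IsClosed {q : N | ∃ p ∈ K, ∃ s : ℝ, s ≤ 0 ∧ q = Θ (s, p)} := by
  have hFclosed : IsClosedMap (fun sp : ℝ × N => (sp.2, Θ sp)) := hproper.isClosedMap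
  have key : ∀ S : Set ℝ, IsClosed S →
      IsClosed {q : N | ∃ p ∈ K, ∃ s : ℝ, s ∈ S ∧ q = Θ (s, p)} := by
    intro S hS
    have hRclosed : IsClosed ((fun sp : ℝ × N => (sp.2, Θ sp)) '' (S ×ˢ Set.univ)) :=
      hFclosed _ (hS.prod isClosed_univ)
    have := succ_closed_of_closed_rel hRclosed hK
    convert this using 1
    ext q
    constructor
    · rintro ⟨p, hp, s, hs, rfl⟩
      exact ⟨p, hp, ⟨(s, p), ⟨hs, trivial⟩, rfl⟩⟩
    · rintro ⟨p, hp, ⟨⟨s, p'⟩, ⟨hs, -⟩, heq⟩⟩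
      obtain ⟨h1, h2⟩ := Prod.mk.injEq .. ▸ heq
      exact ⟨p, hp, s, hs, by simp only [← h1] at h2 ⊢; exact h2.symm⟩
  exact ⟨by simpa using key {s : ℝ | 0 ≤ s} (isClosed_le continuous_const continuous_id),
         by simpa using key {s : ℝ | s ≤ 0} (isClosed_le continuous_id continuous_const)⟩
end
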